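/- arXiv:2509.12656 — 3 statements merged into one kernel-verified Lean document; each statement's English description precedes it below -/
import Mathlib

section
/- Let G be a group acting on a countably infinite set A with finitely many orbits on injective n-tuples for every n, and let a ∈ A. Then the number of orbits of the point stabilizer G_a on injective n-tuples is at most n·ℓ_n(G) + ℓ_{n+1}(G), and hence at most (n+1)·ℓ_{n+1}(G). -/
/-!
An injective `n`-tuple `x` either contains `a`, at some position `i`, or appending `a` to it gives
an injective `(n+1)`-tuple `x.a`. If two tuples of the first kind with the same position `i` are
`G`-conjugate, the conjugating element fixes `a`; the same holds if `x.a` and `y.a` are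
`G`-conjugate. So the `G_a`-orbit of `x` is determined by the pair (`i`, `G`-orbit of `x`) or by
the `G`-orbit of `x.a`, which leaves at most `n·ℓ_n(G) + ℓ_{n+1}(G)` possibilities. The second
bound follows from `ℓ_n(G) ≤ ℓ_{n+1}(G)`: as `A` is infinite, every injective `n`-tuple extends to
an injective `(n+1)`-tuple, and conjugate extensions have conjugate restrictions.
-/

/-- `ℓ_n(G)`: the number of orbits of `G` on injective `n`-tuples from `A`. -/
noncomputable def ellCard (G : Type*) [Group G] (A : Type*) [MulAction G A] (n : ℕ) : ℕ :=
  Nat.card (Set.range fun f : {f : Fin n → A // Function.Injective f} => MulAction.orbit G f.1)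

open MulAction Function Set

theorem Function.FactorsThrough.card_range_le {ι α β : Type*} [Finite β] {f : ι → α} {g : ι → β}
    (h : f.FactorsThrough g) : Nat.card (range f) ≤ Nat.card β := by
  rcases isEmpty_or_nonempty ι with hι | ⟨⟨x⟩⟩
  · simp [range_eq_empty f]
  · have : Nonempty α := ⟨f x⟩
    obtain ⟨e, rfl⟩ := (factorsThrough_iff f).1 h
    exact (Nat.card_mono (toFinite _) (range_comp_subset_range g e)).trans
      (Finite.card_range_le e)

theorem MulAction.orbit_stabilizer_eq_of_smul_eq {G α β : Type*} [Group G] [MulAction G α]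
    [MulAction G β] {b : β} {x y : α} {g : G} (hb : g • b = b) (hxy : g • x = y) :
    orbit (stabilizer G b) x = orbit (stabilizer G b) y :=
  (orbit_eq_iff.2 ⟨⟨g, hb⟩, hxy⟩).symm

theorem Fin.smul_snoc {G A : Type*} [SMul G A] {n : ℕ} (g : G) (x : Fin n → A) (b : A) :
    g • (Fin.snoc x b : Fin (n + 1) → A) = Fin.snoc (g • x) (g • b) :=
  Fin.comp_snoc (g • ·) x b

section Tuples

variable {G A : Type*} [Group G] [MulAction G A] {n : ℕ}

def tupleOrbit (G A : Type*) [Group G] [MulAction G A] (n : ℕ)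
    (x : {f : Fin n → A // Injective f}) : Set (Fin n → A) :=
  orbit G x.1

theorem ellCard_eq_card_range_tupleOrbit (G A : Type*) [Group G] [MulAction G A] (n : ℕ) :
    ellCard G A n = Nat.card (range (tupleOrbit G A n)) :=
  rfl

def tupleSnoc (x : {f : Fin n → A // Injective f}) {b : A} (hb : b ∉ range x.1) :
    {f : Fin (n + 1) → A // Injective f} :=
  ⟨Fin.snoc x.1 b, Fin.snoc_injective_of_injective x.2 hb⟩

theorem exists_smul_eq_of_tupleOrbit_eq {x y : {f : Fin n → A // Injective f}}
    (h : tupleOrbit G A n x = tupleOrbit G A n y) : ∃ g : G, g • x.1 = y.1 :=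
  mem_orbit_iff.1 (orbit_eq_iff.1 h.symm)

theorem exists_smul_eq_of_tupleOrbit_tupleSnoc_eq {x y : {f : Fin n → A // Injective f}} {b c : A}
    {hb : b ∉ range x.1} {hc : c ∉ range y.1}
    (h : tupleOrbit G A (n + 1) (tupleSnoc x hb) = tupleOrbit G A (n + 1) (tupleSnoc y hc)) :
    ∃ g : G, g • x.1 = y.1 ∧ g • b = c := by
  obtain ⟨g, hg⟩ := exists_smul_eq_of_tupleOrbit_eq h
  exact ⟨g, Fin.snoc_inj.1 ((Fin.smul_snoc g x.1 b).symm.trans hg)⟩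

theorem ellCard_le_ellCard_succ [Infinite A]
    (hfin : (range (tupleOrbit G A (n + 1))).Finite) :
    ellCard G A n ≤ ellCard G A (n + 1) := by
  have : Finite (range (tupleOrbit G A (n + 1))) := hfin.to_subtype
  rw [ellCard_eq_card_range_tupleOrbit, ellCard_eq_card_range_tupleOrbit]
  choose b hb using fun x : {f : Fin n → A // Injective f} =>
    (finite_range x.1).infinite_compl.nonempty
  refine FactorsThrough.card_range_le
    (g := fun x => rangeFactorization (tupleOrbit G A (n + 1)) (tupleSnoc x (hb x)))
    fun x y hxy => ?_
  obtain ⟨g, hg, -⟩ := exists_smul_eq_of_tupleOrbit_tupleSnoc_eq (congrArg Subtype.val hxy)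
  exact (orbit_eq_iff.2 ⟨g, hg⟩).symm

theorem ellCard_stabilizer_le (a : A) (hfin : (range (tupleOrbit G A n)).Finite)
    (hfin' : (range (tupleOrbit G A (n + 1))).Finite) :
    ellCard (stabilizer G a) A n ≤ n * ellCard G A n + ellCard G A (n + 1) := by
  classical
  have := hfin.to_subtype
  have := hfin'.to_subtype
  let code (x : {f : Fin n → A // Injective f}) :
      Fin n × range (tupleOrbit G A n) ⊕ range (tupleOrbit G A (n + 1)) :=
    if h : a ∈ range x.1 then .inl (h.choose, rangeFactorization _ x)
    else .inr (rangeFactorization _ (tupleSnoc x h))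
  have hcode : (tupleOrbit (stabilizer G a) A n).FactorsThrough code := by
    intro x y hxy
    by_cases hx : a ∈ range x.1 <;> by_cases hy : a ∈ range y.1 <;>
      simp only [code, hx, hy, dif_pos, dif_neg, not_false_eq_true, Sum.inl.injEq, Sum.inr.injEq,
        Prod.mk.injEq, reduceCtorEq] at hxy
    · obtain ⟨g, hg⟩ := exists_smul_eq_of_tupleOrbit_eq (congrArg Subtype.val hxy.2)
      refine orbit_stabilizer_eq_of_smul_eq ?_ hg
      calc g • a = g • x.1 hx.choose := by rw [hx.choose_spec]
        _ = y.1 hy.choose := by rw [← hxy.1, ← hg]; rfl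
        _ = a := hy.choose_spec
    · obtain ⟨g, hg, ha⟩ := exists_smul_eq_of_tupleOrbit_tupleSnoc_eq (congrArg Subtype.val hxy)
      exact orbit_stabilizer_eq_of_smul_eq ha hg
  rw [ellCard_eq_card_range_tupleOrbit, ellCard_eq_card_range_tupleOrbit,
    ellCard_eq_card_range_tupleOrbit]
  calc _ ≤ Nat.card (Fin n × range (tupleOrbit G A n) ⊕ range (tupleOrbit G A (n + 1))) :=
        hcode.card_range_le
    _ = _ := by rw [Nat.card_sum, Nat.card_prod, Nat.card_fin]

end Tuples

theorem stmt3_general (G A : Type*) [Group G] [MulAction G A] [Infinite A]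
    (hfin : ∀ n : ℕ,
      (Set.range fun f : {f : Fin n → A // Function.Injective f} =>
        MulAction.orbit G f.1).Finite)
    (a : A) (n : ℕ) :
    ellCard (MulAction.stabilizer G a) A n ≤ n * ellCard G A n + ellCard G A (n + 1) ∧
    ellCard (MulAction.stabilizer G a) A n ≤ (n + 1) * ellCard G A (n + 1) := by
  have hstab := ellCard_stabilizer_le a (hfin n) (hfin (n + 1))
  have hmono : ellCard G A n ≤ ellCard G A (n + 1) := ellCard_le_ellCard_succ (hfin (n + 1))
  refine ⟨hstab, hstab.trans ?_⟩
  calc n * ellCard G A n + ellCard G A (n + 1)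
      ≤ n * ellCard G A (n + 1) + ellCard G A (n + 1) := by gcongr
    _ = (n + 1) * ellCard G A (n + 1) := by ring

/-- For a group `G` acting on a countably infinite set `A` with finitely many orbits
on injective `n`-tuples for every `n`, and `a ∈ A`, the point stabilizer `G_a` satisfies
`ℓ_n(G_a) ≤ n·ℓ_n(G) + ℓ_{n+1}(G) ≤ (n+1)·ℓ_{n+1}(G)`. -/
theorem stmt3 (G A : Type*) [Group G] [MulAction G A] [Countable A] [Infinite A]
    (hfin : ∀ n : ℕ,
      (Set.range fun f : {f : Fin n → A // Function.Injective f} =>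
        MulAction.orbit G f.1).Finite)
    (a : A) (n : ℕ) :
    ellCard (MulAction.stabilizer G a) A n ≤ n * ellCard G A n + ellCard G A (n + 1) ∧
    ellCard (MulAction.stabilizer G a) A n ≤ (n + 1) * ellCard G A (n + 1) :=
  stmt3_general G A hfin a n
end

section
/- Let G be a group acting on a countably infinite set A with finitely many orbits on injective n-tuples, and let F ⊆ A be finite. Then for all n > |F|, ℓ_n(G) ≥ ℓ_{n-|F|}(G_F) / (n·(n-1)·…·(n-|F|+1)), where G_F is the pointwise stabilizer of F. -/
/-!
Extend an injective `m`-tuple `f` to an injective `(m+1)`-tuple `Fin.cons b f` containing `a`,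
say at position `i` (take `b = a` if `a ∉ f`, a fresh point otherwise). If two such extensions
lie in one `G`-orbit and carry `a` at the same position, the element moving one to the other
fixes `a`, so their tails lie in one `G_a`-orbit. Hence `(i, G-orbit of the extension)`
determines the `G_a`-orbit of `f`, and `ℓ_m(G_a) ≤ (m+1) ℓ_{m+1}(G)`. Applying this to the
points of `F` one at a time, within the stabilizer of the previous ones, gives the bound.
-/

open MulAction Function

section TupleOrbits

variable (G A : Type*) [Group G] [MulAction G A]

def tupleOrbits (n : ℕ) : Set (Set (Fin n → A)) :=
  Set.range fun f : {f : Fin n → A // Injective f} => orbit G f.1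

lemma ellCard_eq_ncard (n : ℕ) : ellCard G A n = (tupleOrbits G A n).ncard := rfl

lemma tupleOrbits_top (n : ℕ) : tupleOrbits (⊤ : Subgroup G) A n = tupleOrbits G A n := by
  have horbit (x : Fin n → A) : orbit (⊤ : Subgroup G) x = orbit G x :=
    (orbit_subgroup_subset _ x).antisymm fun _ ⟨g, hg⟩ => ⟨⟨g, Subgroup.mem_top g⟩, hg⟩
  simp only [tupleOrbits, horbit]

end TupleOrbits

section PointwiseStabilizer

variable {G A : Type*} [Group G] [MulAction G A]

lemma exists_injective_cons_eq [Infinite A] {m : ℕ} {f : Fin m → A} (hf : Injective f) (a : A) :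
    ∃ (b : A) (i : Fin (m + 1)), Injective (Fin.cons b f : Fin (m + 1) → A) ∧
      (Fin.cons b f : Fin (m + 1) → A) i = a := by
  by_cases ha : a ∈ Set.range f
  · obtain ⟨j, rfl⟩ := ha
    obtain ⟨b, hb⟩ := (Set.finite_range f).infinite_compl.nonempty
    exact ⟨b, j.succ, Fin.cons_injective_iff.mpr ⟨hb, hf⟩, Fin.cons_succ _ _ _⟩
  · exact ⟨a, 0, Fin.cons_injective_iff.mpr ⟨ha, hf⟩, Fin.cons_zero _ _⟩

lemma tail_mem_orbit_stabilizer_inf (H : Subgroup G) {a : A} {m : ℕ}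
    {e e' : Fin (m + 1) → A} {i : Fin (m + 1)} (he : e i = a) (he' : e' i = a)
    (h : e' ∈ orbit H e) :
    Fin.tail e' ∈ orbit ↥(stabilizer G a ⊓ H) (Fin.tail e) := by
  obtain ⟨⟨g, hgH⟩, rfl⟩ := h
  have hga : g • a = a := by simpa [← he] using he'
  exact ⟨⟨g, hga, hgH⟩, rfl⟩

lemma encard_tupleOrbits_stabilizer_inf_le [Infinite A] (H : Subgroup G) (a : A) (m : ℕ) :
    (tupleOrbits ↥(stabilizer G a ⊓ H) A m).encard ≤
      (m + 1) * (tupleOrbits ↥H A (m + 1)).encard := by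
  choose b pos hinj hpos using fun f : {f : Fin m → A // Injective f} =>
    exists_injective_cons_eq f.2 a
  choose rep hrep using fun O : tupleOrbits ↥(stabilizer G a ⊓ H) A m => O.2
  beta_reduce at hrep
  let Φ (O : tupleOrbits ↥(stabilizer G a ⊓ H) A m) : Fin (m + 1) × tupleOrbits ↥H A (m + 1) :=
    (pos (rep O), ⟨_, ⟨Fin.cons (b (rep O)) (rep O).1, hinj (rep O)⟩, rfl⟩)
  have hΦ : Injective Φ := by
    intro O O' h
    simp only [Φ, Prod.mk.injEq, Subtype.ext_iff] at h
    obtain ⟨hi, horbit⟩ := h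
    have hmem := tail_mem_orbit_stabilizer_inf H (hpos (rep O)) (hi ▸ hpos (rep O'))
      (horbit ▸ mem_orbit_self _)
    rw [Fin.tail_cons, Fin.tail_cons] at hmem
    ext1
    rw [← hrep, ← hrep, orbit_eq_iff.mpr hmem]
  calc (tupleOrbits ↥(stabilizer G a ⊓ H) A m).encard
      ≤ ENat.card (Fin (m + 1) × tupleOrbits ↥H A (m + 1)) := ENat.card_le_card_of_injective hΦ
    _ = (m + 1) * (tupleOrbits ↥H A (m + 1)).encard := by simp

/- Counting in `ℕ∞` keeps the induction free of finiteness hypotheses; finiteness of the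
`G`-orbits is only needed to return to `ℕ` at the end. -/
theorem encard_tupleOrbits_iInf_stabilizer_le [Infinite A] (F : Finset A) {n : ℕ}
    (hn : F.card ≤ n) :
    (tupleOrbits ↥(⨅ a ∈ F, stabilizer G a) A (n - F.card)).encard ≤
      n.descFactorial F.card * (tupleOrbits G A n).encard := by
  classical
  induction F using Finset.induction_on with
  | empty =>
    have htop : ⨅ a ∈ (∅ : Finset A), stabilizer G a = ⊤ := by simp
    rw [Finset.card_empty, Nat.sub_zero, htop, tupleOrbits_top]
    simp
  | @insert a s ha ih =>
    rw [Finset.card_insert_of_notMem ha] at hn ⊢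
    have hsub : n - s.card = n - (s.card + 1) + 1 := by omega
    calc (tupleOrbits ↥(⨅ b ∈ insert a s, stabilizer G b) A (n - (s.card + 1))).encard
        ≤ (n - s.card : ℕ) * (tupleOrbits ↥(⨅ b ∈ s, stabilizer G b) A (n - s.card)).encard := by
          rw [Finset.iInf_insert, hsub]
          exact_mod_cast encard_tupleOrbits_stabilizer_inf_le _ a _
      _ ≤ (n - s.card : ℕ) * (n.descFactorial s.card * (tupleOrbits G A n).encard) := by
          gcongr
          exact ih (by omega)
      _ = n.descFactorial (s.card + 1) * (tupleOrbits G A n).encard := by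
          rw [Nat.descFactorial_succ]
          push_cast
          ring

end PointwiseStabilizer

theorem stmt4_general (G A : Type*) [Group G] [MulAction G A] [Infinite A]
    (hfin : ∀ n : ℕ,
      (Set.range fun f : {f : Fin n → A // Function.Injective f} =>
        MulAction.orbit G f.1).Finite)
    (F : Finset A) (n : ℕ) (hn : F.card < n) :
    ellCard ↥((⨅ a ∈ F, MulAction.stabilizer G a : Subgroup G)) A (n - F.card) ≤
      Nat.descFactorial n F.card * ellCard G A n := by
  have hbound := encard_tupleOrbits_iInf_stabilizer_le (G := G) F hn.le
  have hfinG : (tupleOrbits G A n).Finite := hfin n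
  rw [← hfinG.cast_ncard_eq, ← ellCard_eq_ncard] at hbound
  have hfinF : (tupleOrbits ↥(⨅ a ∈ F, stabilizer G a) A (n - F.card)).Finite :=
    Set.encard_lt_top_iff.mp (hbound.trans_lt (mod_cast ENat.natCast_lt_top _))
  rw [← hfinF.cast_ncard_eq, ← ellCard_eq_ncard] at hbound
  exact_mod_cast hbound

/-- For a group `G` acting on a countably infinite set `A` with finitely many orbits on
injective `n`-tuples, and a finite `F ⊆ A`, for all `n > |F|` we have
`ℓ_n(G) ≥ ℓ_{n-|F|}(G_F) / (n·(n-1)⋯(n-|F|+1))`, where `G_F` is the pointwise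
stabilizer of `F`; equivalently `n·(n-1)⋯(n-|F|+1) · ℓ_n(G) ≥ ℓ_{n-|F|}(G_F)`. -/
theorem stmt4 (G A : Type*) [Group G] [MulAction G A] [Countable A] [Infinite A]
    (hfin : ∀ n : ℕ,
      (Set.range fun f : {f : Fin n → A // Function.Injective f} =>
        MulAction.orbit G f.1).Finite)
    (F : Finset A) (n : ℕ) (hn : F.card < n) :
    ellCard ↥((⨅ a ∈ F, MulAction.stabilizer G a : Subgroup G)) A (n - F.card) ≤
      Nat.descFactorial n F.card * ellCard G A n :=
  stmt4_general G A hfin F n hn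
end

section
/- Let C be a hereditary class of finite graphs that contains, for every k, a graph in which the half-graph of order k is semi-induced. Then for every ε > 0 and all sufficiently large n, the number of labelled graphs in C on vertex set {1,...,n} is greater than n!/(2+ε)^n. -/
/-!
If `a, b : Fin (2n) → V` semi-induce a half-graph, the collisions `a p = b q` force `q < p` and
each `p` collides with at most one `q`, so colouring every index opposite to its collision partner
(well-founded recursion) gives `n` indices on which `a` and `b` have disjoint images. Along the
zigzag `a₀, b₁, a₂, b₃, …` of these, the induced graph `H` on `Fin n` has `x ~ y ↔ x ≤ y` whenever
`x` is even and `y` odd. For a permutation `π`, the graph `H ∘ π` together with the parities of `π`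
determines `π`: consecutive positions have opposite parity, so the comparisons between even and odd
positions already fix the order. Hence a hereditary class contains at least `n! / 2ⁿ` graphs on
`Fin n`.
-/

open Nat

theorem exists_bool_coloring_of_lt {α : Type*} [Preorder α] [WellFoundedLT α]
    (R : α → α → Prop) (hlt : ∀ p q, R p q → q < p)
    (hfun : ∀ p q q', R p q → R p q' → q = q') :
    ∃ c : α → Bool, ∀ p q, R p q → c p ≠ c q := by
  classical
  let c : α → Bool := wellFounded_lt.fix fun p ih =>
    if h : ∃ q, R p q then !ih h.choose (hlt _ _ h.choose_spec) else false
  refine ⟨c, fun p q hpq => ?_⟩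
  have h : ∃ q, R p q := ⟨q, hpq⟩
  have hc : c p = !c q := by
    rw [show c p = _ from wellFounded_lt.fix_eq _ p, dif_pos h]
    exact congrArg (fun x => !c x) (hfun _ _ _ h.choose_spec hpq)
  simp [hc]

theorem exists_finset_card_eq_forall_not_rel {α : Type*} [Preorder α] [WellFoundedLT α]
    [Fintype α] (R : α → α → Prop) (hlt : ∀ p q, R p q → q < p)
    (hfun : ∀ p q q', R p q → R p q' → q = q') {n : ℕ} (hn : 2 * n ≤ Fintype.card α) :
    ∃ S : Finset α, S.card = n ∧ ∀ p ∈ S, ∀ q ∈ S, ¬ R p q := by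
  classical
  obtain ⟨c, hc⟩ := exists_bool_coloring_of_lt R hlt hfun
  obtain ⟨y, hy⟩ := Fintype.exists_le_card_fiber_of_mul_le_card c (by simpa using hn)
  obtain ⟨S, hSsub, hScard⟩ := Finset.exists_subset_card_eq hy
  refine ⟨S, hScard, fun p hp q hq hpq => hc p q hpq ?_⟩
  rw [(Finset.mem_filter.mp (hSsub hp)).2, (Finset.mem_filter.mp (hSsub hq)).2]

theorem Equiv.Perm.eq_one_of_strictMono {α : Type*} [LinearOrder α] [WellFoundedLT α]
    {τ : Equiv.Perm α} (hτ : StrictMono τ) : τ = 1 := by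
  have : (τ : α → α) = id := (hτ.range_inj strictMono_id).mp (by simp)
  ext x; simp [this]

theorem Fin.strictMono_of_lt_add_one {n : ℕ} {β : Type*} [Preorder β] (f : Fin n → β)
    (hf : ∀ x y : Fin n, (y : ℕ) = x + 1 → f x < f y) : StrictMono f := by
  cases n with
  | zero => exact fun x => x.elim0
  | succ n => exact Fin.strictMono_iff_lt_succ.mpr fun i => hf _ _ (by simp)

theorem Equiv.Perm.eq_of_le_iff_le_of_even_of_not_even {n : ℕ} (π σ : Equiv.Perm (Fin n))
    (h : ∀ i j, Even (π i : ℕ) → ¬ Even (π j : ℕ) → (π i ≤ π j ↔ σ i ≤ σ j)) : π = σ := by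
  suffices hmono : StrictMono (σ * π⁻¹) from
    (mul_inv_eq_one.mp (Equiv.Perm.eq_one_of_strictMono hmono)).symm
  refine Fin.strictMono_of_lt_add_one _ fun x y hxy => ?_
  obtain ⟨i, rfl⟩ := π.surjective x
  obtain ⟨j, rfl⟩ := π.surjective y
  have hij : i ≠ j := by rintro rfl; omega
  simp only [Equiv.Perm.mul_apply, Equiv.Perm.coe_inv, Equiv.symm_apply_apply]
  by_cases hi : Even (π i : ℕ)
  · have hj : ¬ Even (π j : ℕ) := by rw [hxy]; exact Nat.not_even_iff_odd.mpr hi.add_one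
    exact lt_of_le_of_ne ((h i j hi hj).mp (by omega)) (σ.injective.ne hij)
  · have hj : Even (π j : ℕ) := by rw [hxy]; exact (Nat.not_even_iff_odd.mp hi).add_one
    exact lt_of_not_ge fun hle => by have := (h j i hj hi).mpr hle; omega

namespace SimpleGraph

variable {V : Type*}

def IsSemiInducedHalfGraph {ι : Type*} [Preorder ι] (G : SimpleGraph V) (a b : ι → V) : Prop :=
  ∀ i j, G.Adj (a i) (b j) ↔ i ≤ j

variable {G : SimpleGraph V}

namespace IsSemiInducedHalfGraph

variable {ι : Type*} {a b : ι → V}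

theorem injective_left [PartialOrder ι] (h : G.IsSemiInducedHalfGraph a b) : a.Injective :=
  fun i j hij => le_antisymm ((h i j).mp (hij ▸ (h j j).mpr le_rfl))
    ((h j i).mp (hij ▸ (h i i).mpr le_rfl))

theorem injective_right [PartialOrder ι] (h : G.IsSemiInducedHalfGraph a b) : b.Injective :=
  fun i j hij => le_antisymm ((h i j).mp (hij ▸ (h i i).mpr le_rfl))
    ((h j i).mp (hij ▸ (h j j).mpr le_rfl))

theorem lt_of_left_eq_right [LinearOrder ι] (h : G.IsSemiInducedHalfGraph a b) {i j : ι}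
    (hij : a i = b j) : j < i :=
  lt_of_not_ge fun hle => G.irrefl (hij ▸ (h i j).mpr hle : G.Adj (a i) (a i))

theorem comp_orderEmbedding {κ : Type*} [Preorder ι] [Preorder κ]
    (h : G.IsSemiInducedHalfGraph a b) (e : κ ↪o ι) :
    G.IsSemiInducedHalfGraph (a ∘ e) (b ∘ e) :=
  fun i j => (h (e i) (e j)).trans e.le_iff_le

theorem exists_disjoint {n : ℕ} {a b : Fin (2 * n) → V} (h : G.IsSemiInducedHalfGraph a b) :
    ∃ A B : Fin n → V, G.IsSemiInducedHalfGraph A B ∧ ∀ i j, A i ≠ B j := by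
  obtain ⟨S, hS, hdisj⟩ := exists_finset_card_eq_forall_not_rel (fun p q => a p = b q)
    (fun _ _ => h.lt_of_left_eq_right) (fun _ _ _ hq hq' => h.injective_right (hq.symm.trans hq'))
    (n := n) (by simp)
  let e := S.orderEmbOfFin hS
  exact ⟨a ∘ e, b ∘ e, h.comp_orderEmbedding e,
    fun i j => hdisj _ (S.orderEmbOfFin_mem hS i) _ (S.orderEmbOfFin_mem hS j)⟩

end IsSemiInducedHalfGraph

variable {n : ℕ} {A B : Fin n → V}

def zigzag (A B : Fin n → V) (x : Fin n) : V :=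
  if Even (x : ℕ) then A x else B x

theorem zigzag_injective (h : G.IsSemiInducedHalfGraph A B) (hdisj : ∀ i j, A i ≠ B j) :
    (zigzag A B).Injective := by
  intro x y hxy
  unfold zigzag at hxy
  split_ifs at hxy
  exacts [h.injective_left hxy, (hdisj _ _ hxy).elim, (hdisj _ _ hxy.symm).elim,
    h.injective_right hxy]

theorem comap_zigzag_adj (h : G.IsSemiInducedHalfGraph A B) {x y : Fin n}
    (hx : Even (x : ℕ)) (hy : ¬ Even (y : ℕ)) : (G.comap (zigzag A B)).Adj x y ↔ x ≤ y := by
  simpa [zigzag, hx, hy] using h x y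

theorem injective_comap_perm_parity {H : SimpleGraph (Fin n)}
    (hH : ∀ x y : Fin n, Even (x : ℕ) → ¬ Even (y : ℕ) → (H.Adj x y ↔ x ≤ y)) :
    (fun π : Equiv.Perm (Fin n) => (H.comap π, fun i => decide (Even (π i : ℕ)))).Injective := by
  intro π σ hπσ
  obtain ⟨hcomap, hparity⟩ := Prod.mk.inj hπσ
  refine Equiv.Perm.eq_of_le_iff_le_of_even_of_not_even π σ fun i j hi hj => ?_
  have hσi : Even (σ i : ℕ) := by simpa [hi] using congrFun hparity i
  have hσj : ¬ Even (σ j : ℕ) := by simpa [hj] using congrFun hparity j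
  rw [← hH _ _ hi hj, ← hH _ _ hσi hσj, ← comap_adj, ← comap_adj, hcomap]

theorem factorial_le_card_mul_two_pow (h : G.IsSemiInducedHalfGraph A B)
    (hdisj : ∀ i j, A i ≠ B j) (S : Set (SimpleGraph (Fin n)))
    (hS : ∀ f : Fin n → V, f.Injective → G.comap f ∈ S) :
    n ! ≤ Nat.card S * 2 ^ n := by
  classical
  let H := G.comap (zigzag A B)
  have hmem (π : Equiv.Perm (Fin n)) : H.comap π ∈ S := by
    rw [comap_comap]
    exact hS _ ((zigzag_injective h hdisj).comp π.injective)
  let code (π : Equiv.Perm (Fin n)) : S × (Fin n → Bool) :=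
    (⟨H.comap π, hmem π⟩, fun i => decide (Even (π i : ℕ)))
  have hcode : code.Injective := Function.Injective.of_comp (f := Prod.map Subtype.val id)
    (injective_comap_perm_parity fun _ _ => comap_zigzag_adj h)
  simpa [Fintype.card_perm, Nat.card_prod] using Nat.card_le_card_of_injective code hcode

end SimpleGraph

theorem factorial_div_pow_lt {n c : ℕ} (hn : 1 ≤ n) (hc : n ! ≤ c * 2 ^ n) {ε : ℝ} (hε : 0 < ε) :
    (n ! : ℝ) / (2 + ε) ^ n < c := by
  have hc0 : (0 : ℝ) < c := by
    exact_mod_cast Nat.pos_of_ne_zero fun h => (Nat.factorial_pos n).ne' (by simpa [h] using hc)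
  rw [div_lt_iff₀ (by positivity)]
  calc (n ! : ℝ) ≤ c * 2 ^ n := by exact_mod_cast hc
    _ < c * (2 + ε) ^ n := by
      gcongr
      linarith

/-- A hereditary class of finite graphs containing arbitrarily large semi-induced
half-graphs has labelled growth rate exceeding `n!/(2+ε)ⁿ` for every `ε > 0`. -/
theorem stmt6 (C : ∀ n : ℕ, Set (SimpleGraph (Fin n)))
    (hHer : ∀ (n m : ℕ) (f : Fin m → Fin n), Function.Injective f →
      ∀ G ∈ C n, SimpleGraph.comap f G ∈ C m)
    (hHalf : ∀ k : ℕ, ∃ (n : ℕ) (G : SimpleGraph (Fin n)), G ∈ C n ∧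
      ∃ a b : Fin k → Fin n, ∀ i j : Fin k, G.Adj (a i) (b j) ↔ i ≤ j)
    (ε : ℝ) (hε : 0 < ε) :
    ∃ N : ℕ, ∀ n : ℕ, N ≤ n → ((n ! : ℝ)) / (2 + ε) ^ n < Nat.card (C n) := by
  refine ⟨1, fun n hn => factorial_div_pow_lt hn ?_ hε⟩
  obtain ⟨M, G, hG, a, b, hab⟩ := hHalf (2 * n)
  obtain ⟨A, B, hAB, hdisj⟩ := SimpleGraph.IsSemiInducedHalfGraph.exists_disjoint hab
  exact SimpleGraph.factorial_le_card_mul_two_pow hAB hdisj (C n) fun f hf => hHer M n f hf G hG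
end
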